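/- Let R be an associative ring with unity and let M be a two-degree Ding projective left R-module. Then M is a direct summand of a strongly two-degree Ding projective left R-module; in fact, if ··· → D₁ → D₀ →^{δ₀} D₋₁ → ··· is the defining exact sequence with M ≅ ker(δ₀), then ⊕_i ker(δ_i) is strongly two-degree Ding projective and M is a direct summand of it. -/

import Mathlib

/-!
Direct sums preserve exactness and kernels, and since `Hom(⨁ Xᵢ, F) = ∏ Hom(Xᵢ, F)` they also
preserve `Hom(-, F)`-exactness; in particular a direct sum of Ding projective modules is Ding
projective. Fold the complex `D` into the single module `⨁ₙ Dₙ₊₁` with the endomorphism that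
sends the summand `Dₙ₊₁` (index `n`) into the summand `Dₙ` (index `n - 1`) by `dₙ`. Up to
reindexing isomorphisms, two consecutive copies of this endomorphism form the pair
`(⨁ₙ dₙ₊₁, ⨁ₙ dₙ)`, so it is exact and `Hom(-, F)`-exact for flat `F`, and its kernel is
`⨁ₙ ker dₙ`, which has `M ≅ ker d₋₁` as a direct summand.
-/

universe u

open scoped TensorProduct DirectSum

/-- The subgroup of `E ⊗[ℤ] F` by which one quotients to obtain the balanced tensor
product `E ⊗_R F` of a right `R`-module `E` and a left `R`-module `F`. -/
def balancedSub (R : Type u) [Ring R] (E F : Type u) [AddCommGroup E] [Module Rᵐᵒᵖ E]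
    [AddCommGroup F] [Module R F] : Submodule ℤ (TensorProduct ℤ E F) :=
  Submodule.span ℤ
    {x | ∃ (r : R) (e : E) (f : F),
      x = (MulOpposite.op r • e) ⊗ₜ[ℤ] f - e ⊗ₜ[ℤ] (r • f)}

/-- The tensor product `E ⊗_R F` of a right `R`-module `E` and a left `R`-module `F`
over a possibly noncommutative ring `R`, realized as a quotient of `E ⊗[ℤ] F`. -/
def ModTensor (R : Type u) [Ring R] (E F : Type u) [AddCommGroup E] [Module Rᵐᵒᵖ E]
    [AddCommGroup F] [Module R F] : Type u :=
  TensorProduct ℤ E F ⧸ balancedSub R E F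

noncomputable instance (R : Type u) [Ring R] (E F : Type u) [AddCommGroup E] [Module Rᵐᵒᵖ E]
    [AddCommGroup F] [Module R F] : AddCommGroup (ModTensor R E F) :=
  inferInstanceAs (AddCommGroup (TensorProduct ℤ E F ⧸ balancedSub R E F))

/-- The map `E ⊗_R F → E' ⊗_R F` induced by a map `g : E → E'` of right `R`-modules. -/
noncomputable def ModTensor.mapLeft (R : Type u) [Ring R] {E E' : Type u} [AddCommGroup E]
    [Module Rᵐᵒᵖ E] [AddCommGroup E'] [Module Rᵐᵒᵖ E'] (F : Type u) [AddCommGroup F]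
    [Module R F] (g : E →ₗ[Rᵐᵒᵖ] E') : ModTensor R E F →ₗ[ℤ] ModTensor R E' F :=
  Submodule.mapQ (balancedSub R E F) (balancedSub R E' F)
    (TensorProduct.map (g.restrictScalars ℤ) LinearMap.id)
    (by
      rw [balancedSub, Submodule.span_le]
      rintro x ⟨r, e, f, rfl⟩
      refine Submodule.subset_span ⟨r, g e, f, ?_⟩
      erw [map_sub, TensorProduct.map_tmul, TensorProduct.map_tmul]; simp [map_smul])

/-- The map `E ⊗_R F → E ⊗_R F'` induced by a map `f : F → F'` of left `R`-modules. -/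
noncomputable def ModTensor.mapRight (R : Type u) [Ring R] (E : Type u) [AddCommGroup E]
    [Module Rᵐᵒᵖ E] {F F' : Type u} [AddCommGroup F] [Module R F] [AddCommGroup F']
    [Module R F'] (f : F →ₗ[R] F') : ModTensor R E F →ₗ[ℤ] ModTensor R E F' :=
  Submodule.mapQ (balancedSub R E F) (balancedSub R E F')
    (TensorProduct.map LinearMap.id (f.restrictScalars ℤ))
    (by
      rw [balancedSub, Submodule.span_le]
      rintro x ⟨r, e, y, rfl⟩
      refine Submodule.subset_span ⟨r, e, f y, ?_⟩
      erw [map_sub, TensorProduct.map_tmul, TensorProduct.map_tmul]; simp [map_smul])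

/-- A left module `F` over a (possibly noncommutative) ring `R` is flat if tensoring
with `F` preserves injectivity of maps of right `R`-modules. -/
def IsFlatModule (R : Type u) [Ring R] (F : Type u) [AddCommGroup F] [Module R F] : Prop :=
  ∀ (E E' : Type u) [AddCommGroup E] [Module Rᵐᵒᵖ E] [AddCommGroup E'] [Module Rᵐᵒᵖ E']
    (g : E →ₗ[Rᵐᵒᵖ] E'), Function.Injective g →
      Function.Injective (ModTensor.mapLeft R F g)

/-- `Ext^i_R(M, L) = 0`, expressed using the `Ext` functor on the category of left
`R`-modules (with its `ℤ`-linear structure). -/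
def ExtIsZero (R : Type u) [Ring R] (i : ℕ) (M L : Type u) [AddCommGroup M] [Module R M]
    [AddCommGroup L] [Module R L] : Prop :=
  Subsingleton ((((_root_.Ext ℤ (ModuleCat.{u} R) i).obj
    (Opposite.op (ModuleCat.of R M))).obj (ModuleCat.of R L)) : Type u)

/-- `FlatDimLE R n L` means the left `R`-module `L` admits a flat resolution of
length at most `n`. -/
def FlatDimLE (R : Type u) [Ring R] : ℕ → ModuleCat.{u} R → Prop
  | 0, L => IsFlatModule R L
  | n + 1, L =>
    ∃ (F K : ModuleCat.{u} R) (ι : (K : Type u) →ₗ[R] F) (π : (F : Type u) →ₗ[R] L),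
      IsFlatModule R F ∧ Function.Injective ι ∧ Function.Surjective π ∧
      Function.Exact ι π ∧ FlatDimLE R n K

/-- A left `R`-module `L` has finite flat dimension if it admits a finite resolution
by flat modules. -/
def HasFiniteFlatDimension (R : Type u) [Ring R] (L : Type u) [AddCommGroup L]
    [Module R L] : Prop :=
  ∃ n : ℕ, FlatDimLE R n (ModuleCat.of R L)

/-- A left `R`-module `M` is Ding projective if there is an exact sequence
`⋯ → P₁ → P₀ → P₋₁ → P₋₂ → ⋯` of projective modules with `M ≅ ker (P₀ → P₋₁)`
which stays exact under `Hom_R(-, F)` for every flat module `F`. -/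
def IsDingProjective (R : Type u) [Ring R] (M : Type u) [AddCommGroup M] [Module R M] : Prop :=
  ∃ (P : ℤ → ModuleCat.{u} R) (d : ∀ n : ℤ, (P (n + 1) : Type u) →ₗ[R] P n),
    (∀ n, Module.Projective R (P n)) ∧
    (∀ n, Function.Exact (d (n + 1)) (d n)) ∧
    (∀ (F : Type u) [AddCommGroup F] [Module R F], IsFlatModule R F →
      ∀ n : ℤ, Function.Exact
        (fun g : (P n : Type u) →ₗ[R] F => g ∘ₗ d n)
        (fun g : (P (n + 1) : Type u) →ₗ[R] F => g ∘ₗ d (n + 1))) ∧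
    Nonempty (M ≃ₗ[R] LinearMap.ker (d (-1)))

/-- A left `R`-module `M` is two-degree Ding projective if there is an exact sequence
`⋯ → D₁ → D₀ → D₋₁ → D₋₂ → ⋯` of Ding projective modules with `M ≅ ker (D₀ → D₋₁)`
which stays exact under `Hom_R(-, F)` for every flat module `F`. -/
def IsTwoDegreeDingProjective (R : Type u) [Ring R] (M : Type u) [AddCommGroup M]
    [Module R M] : Prop :=
  ∃ (D : ℤ → ModuleCat.{u} R) (d : ∀ n : ℤ, (D (n + 1) : Type u) →ₗ[R] D n),
    (∀ n, IsDingProjective R (D n)) ∧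
    (∀ n, Function.Exact (d (n + 1)) (d n)) ∧
    (∀ (F : Type u) [AddCommGroup F] [Module R F], IsFlatModule R F →
      ∀ n : ℤ, Function.Exact
        (fun g : (D n : Type u) →ₗ[R] F => g ∘ₗ d n)
        (fun g : (D (n + 1) : Type u) →ₗ[R] F => g ∘ₗ d (n + 1))) ∧
    Nonempty (M ≃ₗ[R] LinearMap.ker (d (-1)))

/-- A left `R`-module `M` is strongly two-degree Ding projective if there is an exact
sequence `⋯ →f D →f D →f D →f ⋯` with `D` Ding projective and a single map `f`, with
`M ≅ ker f`, which stays exact under `Hom_R(-, F)` for every flat module `F`. -/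
def IsStronglyTwoDegreeDingProjective (R : Type u) [Ring R] (M : Type u) [AddCommGroup M]
    [Module R M] : Prop :=
  ∃ (D : ModuleCat.{u} R) (f : (D : Type u) →ₗ[R] D),
    IsDingProjective R D ∧
    Function.Exact f f ∧
    (∀ (F : Type u) [AddCommGroup F] [Module R F], IsFlatModule R F →
      Function.Exact
        (fun g : (D : Type u) →ₗ[R] F => g ∘ₗ f)
        (fun g : (D : Type u) →ₗ[R] F => g ∘ₗ f)) ∧
    Nonempty (M ≃ₗ[R] LinearMap.ker f)

/-- A left `R`-module `M` is Gorenstein projective if there is an exact sequence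
`⋯ → P₁ → P₀ → P₋₁ → P₋₂ → ⋯` of projective modules with `M ≅ ker (P₀ → P₋₁)`
which stays exact under `Hom_R(-, Q)` for every projective module `Q`. -/
def IsGorensteinProjective (R : Type u) [Ring R] (M : Type u) [AddCommGroup M]
    [Module R M] : Prop :=
  ∃ (P : ℤ → ModuleCat.{u} R) (d : ∀ n : ℤ, (P (n + 1) : Type u) →ₗ[R] P n),
    (∀ n, Module.Projective R (P n)) ∧
    (∀ n, Function.Exact (d (n + 1)) (d n)) ∧
    (∀ (Q : Type u) [AddCommGroup Q] [Module R Q], Module.Projective R Q →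
      ∀ n : ℤ, Function.Exact
        (fun g : (P n : Type u) →ₗ[R] Q => g ∘ₗ d n)
        (fun g : (P (n + 1) : Type u) →ₗ[R] Q => g ∘ₗ d (n + 1))) ∧
    Nonempty (M ≃ₗ[R] LinearMap.ker (d (-1)))

/-- A left `R`-module `H` is Gorenstein flat if there is an exact sequence
`⋯ → F₁ → F₀ → F₋₁ → F₋₂ → ⋯` of flat modules with `H ≅ ker (F₀ → F₋₁)` which stays
exact under `E ⊗_R -` for every injective right `R`-module `E`. -/
def IsGorensteinFlat (R : Type u) [Ring R] (H : Type u) [AddCommGroup H] [Module R H] : Prop :=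
  ∃ (F : ℤ → ModuleCat.{u} R) (d : ∀ n : ℤ, (F (n + 1) : Type u) →ₗ[R] F n),
    (∀ n, IsFlatModule R (F n)) ∧
    (∀ n, Function.Exact (d (n + 1)) (d n)) ∧
    (∀ (E : Type u) [AddCommGroup E] [Module Rᵐᵒᵖ E], Module.Injective Rᵐᵒᵖ E →
      ∀ n : ℤ, Function.Exact
        (ModTensor.mapRight R E (d (n + 1)))
        (ModTensor.mapRight R E (d n))) ∧
    Nonempty (H ≃ₗ[R] LinearMap.ker (d (-1)))

/-- A left `R`-module `E` is FP-injective if `Ext¹_R(F, E) = 0` for every finitely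
presented module `F`. -/
def IsFPInjective (R : Type u) [Ring R] (E : Type u) [AddCommGroup E] [Module R E] : Prop :=
  ∀ (F : Type u) [AddCommGroup F] [Module R F], Module.FinitePresentation R F →
    ExtIsZero R 1 F E

/-- A left `R`-module `M` is Ding injective if there is an exact sequence
`⋯ → E₁ → E₀ → E₋₁ → E₋₂ → ⋯` of injective modules with `M ≅ ker (E₀ → E₋₁)`
which stays exact under `Hom_R(H, -)` for every FP-injective module `H`. -/
def IsDingInjective (R : Type u) [Ring R] (M : Type u) [AddCommGroup M] [Module R M] : Prop :=
  ∃ (E : ℤ → ModuleCat.{u} R) (d : ∀ n : ℤ, (E (n + 1) : Type u) →ₗ[R] E n),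
    (∀ n, Module.Injective R (E n)) ∧
    (∀ n, Function.Exact (d (n + 1)) (d n)) ∧
    (∀ (H : Type u) [AddCommGroup H] [Module R H], IsFPInjective R H →
      ∀ n : ℤ, Function.Exact
        (fun g : H →ₗ[R] (E (n + 1 + 1) : Type u) => d (n + 1) ∘ₗ g)
        (fun g : H →ₗ[R] (E (n + 1) : Type u) => d n ∘ₗ g)) ∧
    Nonempty (M ≃ₗ[R] LinearMap.ker (d (-1)))

/-- A left `R`-module `M` is two-degree Ding injective if there is an exact sequence
`⋯ → D₁ → D₀ → D₋₁ → D₋₂ → ⋯` of Ding injective modules with `M ≅ ker (D₀ → D₋₁)`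
which stays exact under `Hom_R(H, -)` for every FP-injective module `H`. -/
def IsTwoDegreeDingInjective (R : Type u) [Ring R] (M : Type u) [AddCommGroup M]
    [Module R M] : Prop :=
  ∃ (D : ℤ → ModuleCat.{u} R) (d : ∀ n : ℤ, (D (n + 1) : Type u) →ₗ[R] D n),
    (∀ n, IsDingInjective R (D n)) ∧
    (∀ n, Function.Exact (d (n + 1)) (d n)) ∧
    (∀ (H : Type u) [AddCommGroup H] [Module R H], IsFPInjective R H →
      ∀ n : ℤ, Function.Exact
        (fun g : H →ₗ[R] (D (n + 1 + 1) : Type u) => d (n + 1) ∘ₗ g)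
        (fun g : H →ₗ[R] (D (n + 1) : Type u) => d n ∘ₗ g)) ∧
    Nonempty (M ≃ₗ[R] LinearMap.ker (d (-1)))


open DirectSum Function LinearMap

namespace DirectSum

variable {R : Type*} [Ring R] {ι : Type*}
  {M N P : ι → Type*} [∀ i, AddCommGroup (M i)] [∀ i, Module R (M i)]
  [∀ i, AddCommGroup (N i)] [∀ i, Module R (N i)]
  [∀ i, AddCommGroup (P i)] [∀ i, Module R (P i)]

theorem exact_lmap {f : ∀ i, M i →ₗ[R] N i} {g : ∀ i, N i →ₗ[R] P i}
    (h : ∀ i, Exact (f i) (g i)) : Exact (lmap f) (lmap g) := by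
  simp only [exact_iff, ker_lmap, range_lmap, fun i => (h i).linearMap_ker_eq]

noncomputable def kerLmapEquiv (f : ∀ i, M i →ₗ[R] N i) :
    (⨁ i, ker (f i)) ≃ₗ[R] ker (lmap f) :=
  (LinearEquiv.ofInjective _ ((lmap_injective _).2 fun i => (ker (f i)).injective_subtype)).trans
    (LinearEquiv.ofEq _ _ (exact_lmap fun i => exact_subtype_ker_map (f i)).linearMap_ker_eq.symm)

theorem exact_precomp_lmap [DecidableEq ι] {F : Type*} [AddCommGroup F] [Module R F]
    {f : ∀ i, M i →ₗ[R] N i} {g : ∀ i, N i →ₗ[R] P i}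
    (h : ∀ i, Exact (fun φ : P i →ₗ[R] F => φ ∘ₗ g i) (fun φ : N i →ₗ[R] F => φ ∘ₗ f i)) :
    Exact (fun φ : (⨁ i, P i) →ₗ[R] F => φ ∘ₗ lmap g)
      (fun φ : (⨁ i, N i) →ₗ[R] F => φ ∘ₗ lmap f) := by
  intro ψ
  constructor
  · intro hψ
    have hlift : ∀ i, ∃ φ : P i →ₗ[R] F, φ ∘ₗ g i = ψ ∘ₗ lof R ι N i := fun i =>
      (h i _).1 <| LinearMap.ext fun x => by
        simpa using DFunLike.congr_fun hψ (lof R ι M i x)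
    choose φ hφ using hlift
    refine ⟨toModule R ι F φ, linearMap_ext R fun i => LinearMap.ext fun x => ?_⟩
    simpa using DFunLike.congr_fun (hφ i) x
  · rintro ⟨φ, rfl⟩
    refine linearMap_ext R fun i => LinearMap.ext fun x => ?_
    simpa using DFunLike.congr_fun ((h i).apply_apply_eq_zero (φ ∘ₗ lof R ι P i)) x

end DirectSum

theorem Function.Exact.comp_surjective {A B C E : Type*} [Zero E] {f : B → C} {g : C → E}
    (hfg : Exact f g) {p : A → B} (hp : Surjective p) : Exact (f ∘ p) g :=
  fun y => by rw [hfg y, hp.range_comp]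

theorem isDingProjective_directSum {R : Type u} [Ring R] {ι : Type} [DecidableEq ι] {M : ι → Type u}
    [∀ i, AddCommGroup (M i)] [∀ i, Module R (M i)] (h : ∀ i, IsDingProjective R (M i)) :
    IsDingProjective R (⨁ i, M i) := by
  choose P dP hP hexact hhom e using h
  refine ⟨fun k => ModuleCat.of R (⨁ i, P i k), fun k => lmap fun i => dP i k,
    fun k => inferInstance, fun k => exact_lmap fun i => hexact i k,
    fun F _ _ hF k => exact_precomp_lmap fun i => hhom i F hF k, ?_⟩
  exact ⟨(DFinsupp.mapRange.linearEquiv fun i => (e i).some).trans (kerLmapEquiv _)⟩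

namespace DirectSum

variable (R : Type*) [Ring R] (N : ℤ → Type*) [∀ n, AddCommGroup (N n)] [∀ n, Module R (N n)]

noncomputable def shiftEquiv : (⨁ n, N n) ≃ₗ[R] ⨁ n, N (n + 1) :=
  lequivCongrLeft R (Equiv.subRight 1)

end DirectSum

section FoldedComplex

variable {R : Type*} [Ring R] {N : ℤ → Type*} [∀ n, AddCommGroup (N n)] [∀ n, Module R (N n)]
  (d : ∀ n : ℤ, N (n + 1) →ₗ[R] N n)

noncomputable def foldedDifferential : (⨁ n, N (n + 1)) →ₗ[R] ⨁ n, N (n + 1) :=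
  shiftEquiv R N ∘ₗ lmap d

theorem foldedDifferential_eq :
    foldedDifferential d = lmap (fun n => d (n + 1)) ∘ₗ shiftEquiv R (fun n => N (n + 1)) :=
  LinearMap.ext fun _ => DFinsupp.ext fun _ => rfl

theorem ker_foldedDifferential : ker (foldedDifferential d) = ker (lmap d) :=
  LinearEquiv.ker_comp _ _

variable {d}

theorem exact_foldedDifferential (hex : ∀ n, Exact (d (n + 1)) (d n)) :
    Exact (foldedDifferential d) (foldedDifferential d) := by
  nth_rw 1 [foldedDifferential_eq]
  rw [foldedDifferential, LinearEquiv.precomp_exact_iff_exact,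
    LinearEquiv.postcomp_exact_iff_exact]
  exact exact_lmap hex

theorem exact_precomp_foldedDifferential {F : Type*} [AddCommGroup F] [Module R F]
    (hhom : ∀ n : ℤ, Exact (fun φ : N n →ₗ[R] F => φ ∘ₗ d n)
      (fun φ : N (n + 1) →ₗ[R] F => φ ∘ₗ d (n + 1))) :
    Exact (fun φ : (⨁ n, N (n + 1)) →ₗ[R] F => φ ∘ₗ foldedDifferential d)
      (fun φ : (⨁ n, N (n + 1)) →ₗ[R] F => φ ∘ₗ foldedDifferential d) := by
  let S := shiftEquiv R N
  let T := shiftEquiv R (fun n => N (n + 1))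
  have hS : Surjective fun φ : (⨁ n, N (n + 1)) →ₗ[R] F => φ ∘ₗ S.toLinearMap :=
    fun χ => ⟨χ ∘ₗ S.symm.toLinearMap, by ext; simp⟩
  have hT : Injective fun ψ : (⨁ n, N (n + 1 + 1)) →ₗ[R] F => ψ ∘ₗ T.toLinearMap :=
    fun ψ ψ' h => by simpa using congrArg (· ∘ₗ T.symm.toLinearMap) h
  have h := ((exact_precomp_lmap hhom).comp_surjective hS).comp_injective _ hT (zero_comp _)
  nth_rw 2 [foldedDifferential_eq]
  exact h

end FoldedComplex

/-- A two-degree Ding projective module `M` is a direct summand of a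
strongly two-degree Ding projective module; in fact, if `⋯ → D₁ → D₀ → D₋₁ → ⋯` is the
defining exact sequence of `M`, then the direct sum of all the kernels of its maps is
strongly two-degree Ding projective and `M` is a direct summand of it. -/
theorem twoDegree_ding_projective_summand_of_strongly (R : Type u) [Ring R]
    (M : Type u) [AddCommGroup M] [Module R M]
    (D : ℤ → ModuleCat.{u} R) (d : ∀ n : ℤ, (D (n + 1) : Type u) →ₗ[R] D n)
    (hD : ∀ n, IsDingProjective R (D n))
    (hex : ∀ n, Function.Exact (d (n + 1)) (d n))
    (hhom : ∀ (F : Type u) [AddCommGroup F] [Module R F], IsFlatModule R F →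
      ∀ n : ℤ, Function.Exact
        (fun g : (D n : Type u) →ₗ[R] F => g ∘ₗ d n)
        (fun g : (D (n + 1) : Type u) →ₗ[R] F => g ∘ₗ d (n + 1)))
    (e : M ≃ₗ[R] LinearMap.ker (d (-1))) :
    IsStronglyTwoDegreeDingProjective R (⨁ n : ℤ, ↥(LinearMap.ker (d n))) ∧
    ∃ (j : M →ₗ[R] ⨁ n : ℤ, ↥(LinearMap.ker (d n)))
      (p : (⨁ n : ℤ, ↥(LinearMap.ker (d n))) →ₗ[R] M),
      p ∘ₗ j = LinearMap.id := by
  refine ⟨⟨ModuleCat.of R (⨁ n, (D (n + 1) : Type u)), foldedDifferential (N := fun n => D n) d,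
    isDingProjective_directSum fun n => hD (n + 1), exact_foldedDifferential hex,
    fun F _ _ hF => exact_precomp_foldedDifferential (hhom F hF), ?_⟩,
    lof R ℤ _ (-1) ∘ₗ e.toLinearMap, e.symm.toLinearMap ∘ₗ component R ℤ _ (-1), ?_⟩
  · rw [ker_foldedDifferential]
    exact ⟨kerLmapEquiv d⟩
  · ext m
    simp
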